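/- arXiv:1801.09627 — 2 statements merged into one kernel-verified Lean document; each statement's English description precedes it below -/
import Mathlib

section
/- With $\mathcal{H}_Q$, $\gamma \in (0,1)$, and bijective $U$ as above, the space $\mathcal{H}_{\psi^Q}$ equipped with the inner product $\langle \varphi_1,\varphi_2\rangle_{\mathcal{H}_{\psi^Q}} := \langle U^{-1}\varphi_1, U^{-1}\varphi_2\rangle_{\mathcal{H}_Q}$ is a reproducing kernel Hilbert space on $\mathcal{Z}\times\mathcal{Z}$ with reproducing kernel $\kappa([\mathbf{z};\mathbf{w}],[\tilde{\mathbf{z}};\tilde{\mathbf{w}}]) = (\kappa^Q(\mathbf{z},\tilde{\mathbf{z}}) - \gamma\kappa^Q(\mathbf{z},\tilde{\mathbf{w}})) - \gamma(\kappa^Q(\mathbf{w},\tilde{\mathbf{z}}) - \gamma\kappa^Q(\mathbf{w},\tilde{\mathbf{w}}))$. -/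
/-- `H_{ψ^Q}`, with inner product transported through the bijection `U`, is an RKHS with
kernel `κ((z,w),(z̃,w̃)) = (κ^Q(z,z̃) - γκ^Q(z,w̃)) - γ(κ^Q(w,z̃) - γκ^Q(w,w̃))`:
the kernel sections lie in the image of `U` and the reproducing property holds. -/
theorem stmt_5 (Z : Type*) (HQ : Submodule ℝ (Z → ℝ)) (κQ : Z → Z → ℝ)
    (inn : (Z → ℝ) → (Z → ℝ) → ℝ)
    (hmem : ∀ w : Z, (fun z => κQ z w) ∈ HQ)
    (hrep : ∀ φ ∈ HQ, ∀ w : Z, inn φ (fun z => κQ z w) = φ w)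
    (hsymm : ∀ f g : Z → ℝ, inn f g = inn g f)
    (hlin : ∀ (f g₁ g₂ : Z → ℝ) (a : ℝ), inn f (a • g₁ + g₂) = a * inn f g₁ + inn f g₂)
    (γ : ℝ) (hγ : γ ∈ Set.Ioo (0 : ℝ) 1) :
    -- (1) the preimage of the kernel section κ(·,(z̃,w̃)) lies in H_Q, i.e.
    -- κ(·,(z̃,w̃)) = U(κ^Q(·,z̃) - γ κ^Q(·,w̃)) ∈ H_{ψ^Q}
    (∀ z' w' : Z, (fun s => κQ s z' - γ * κQ s w') ∈ HQ) ∧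
    -- (2) reproducing property transported through the isometry U:
    -- ⟨U φ, κ(·,(z̃,w̃))⟩_{H_{ψ^Q}} = ⟨φ, κ^Q(·,z̃) - γ κ^Q(·,w̃)⟩_{H_Q} = φ(z̃) - γ φ(w̃)
    (∀ φ ∈ HQ, ∀ z' w' : Z,
      inn φ (fun s => κQ s z' - γ * κQ s w') = φ z' - γ * φ w') ∧
    -- (3) the inner product of two kernel preimages gives the stated kernel value
    (∀ z w z' w' : Z,
      inn (fun s => κQ s z - γ * κQ s w) (fun s => κQ s z' - γ * κQ s w') =
        (κQ z z' - γ * κQ z w') - γ * (κQ w z' - γ * κQ w w')) := by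
  have hκsymm : ∀ a b : Z, κQ a b = κQ b a := by
    intro a b
    have h1 := hrep _ (hmem a) b
    have h2 := hrep _ (hmem b) a
    have := hsymm (fun z => κQ z a) (fun z => κQ z b)
    simp only [h1, h2] at this
    exact this.symm
  have hmem2 : ∀ z' w' : Z, (fun s => κQ s z' - γ * κQ s w') ∈ HQ := by
    intro z' w'
    have : (fun s => κQ s z' - γ * κQ s w') =
        (-γ) • (fun z => κQ z w') + (fun z => κQ z z') := by
      funext s; simp [smul_eq_mul]; ring
    rw [this]
    exact HQ.add_mem (HQ.smul_mem _ (hmem w')) (hmem z')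
  have h2 : ∀ φ ∈ HQ, ∀ z' w' : Z,
      inn φ (fun s => κQ s z' - γ * κQ s w') = φ z' - γ * φ w' := by
    intro φ hφ z' w'
    have heq : (fun s => κQ s z' - γ * κQ s w') =
        (-γ) • (fun z => κQ z w') + (fun z => κQ z z') := by
      funext s; simp [smul_eq_mul]; ring
    rw [heq, hlin, hrep _ hφ, hrep _ hφ]; ring
  refine ⟨hmem2, h2, ?_⟩
  intro z w z' w'
  have := h2 _ (hmem2 z w) z' w'
  simp only [this]
  rw [hκsymm z' z, hκsymm z' w, hκsymm w' z, hκsymm w' w]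
  ring
end

section
/- Under the assumptions of the previous statement, if additionally $\|\mathbf{x}_{n+1} - (\mathbf{x}_n + \mathbf{d})\| \le \varrho_1/\nu_B$ where $B$ is $\nu_B$-Lipschitz, and $\mathbf{u}_n$ satisfies $\nabla B(\mathbf{x}_n)^\top \mathbf{d} \ge -\eta B(\mathbf{x}_n) + \tfrac{\nu}{2}\|\mathbf{d}\|^2 + \varrho_1$ with $0 < \eta \le 1$, then the true next state satisfies the barrier certificate $B(\mathbf{x}_{n+1}) - B(\mathbf{x}_n) \ge -\eta B(\mathbf{x}_n)$. -/
open scoped RealInnerProductSpace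

/-!
The descent lemma for a function whose gradient is `ν`-Lipschitz on the segment `[x, x + d]`
gives `B (x + d) - B x ≥ ⟪∇B x, d⟫ - ν/2 ‖d‖² ≥ -η B x + ϱ₁`; the true next state lies within
`ϱ₁/ν_B` of `x + d`, so the `ν_B`-Lipschitz function `B` changes by at most `ϱ₁` between them.
-/

section DescentLemma

variable {E : Type*} [NormedAddCommGroup E] [InnerProductSpace ℝ E]
  {f : E → ℝ} {f' : E → E} {x d : E} {ν : ℝ}

theorem HasGradientAt.hasDerivAt_comp_add_smul [CompleteSpace E] {g : E} {t : ℝ}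
    (h : HasGradientAt f g (x + t • d)) :
    HasDerivAt (fun s : ℝ => f (x + s • d)) ⟪g, d⟫ t := by
  have hline : HasDerivAt (fun s : ℝ => x + s • d) d t := by
    simpa using ((hasDerivAt_id t).smul_const d).const_add x
  have hcomp := h.hasFDerivAt.comp_hasDerivAt t hline
  simp only [InnerProductSpace.toDual_apply_apply] at hcomp
  exact hcomp

theorem add_smul_mem_segment_add {t : ℝ} (ht : t ∈ Set.Icc (0 : ℝ) 1) :
    x + t • d ∈ segment ℝ x (x + d) := by
  rw [segment_eq_image']
  exact ⟨t, ht, by simp⟩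

theorem inner_sub_mul_sq_le_inner_gradient_add_smul
    (hlip : ∀ p ∈ segment ℝ x (x + d), ∀ q ∈ segment ℝ x (x + d),
      ‖f' p - f' q‖ ≤ ν * ‖p - q‖)
    {t : ℝ} (ht : t ∈ Set.Icc (0 : ℝ) 1) :
    ⟪f' x, d⟫ - ν * t * ‖d‖ ^ 2 ≤ ⟪f' (x + t • d), d⟫ := by
  have hgrad_diff : ‖f' (x + t • d) - f' x‖ ≤ ν * (t * ‖d‖) := by
    simpa [norm_smul, abs_of_nonneg ht.1] using
      hlip _ (add_smul_mem_segment_add ht) x (left_mem_segment ℝ _ _)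
  have hinner : -(‖f' (x + t • d) - f' x‖ * ‖d‖) ≤ ⟪f' (x + t • d) - f' x, d⟫ :=
    neg_le_of_abs_le (abs_real_inner_le_norm _ _)
  rw [inner_sub_left] at hinner
  nlinarith [mul_le_mul_of_nonneg_right hgrad_diff (norm_nonneg d)]

theorem inner_sub_half_mul_sq_le_sub_of_lipschitz_gradient [CompleteSpace E]
    (hgrad : ∀ p ∈ segment ℝ x (x + d), HasGradientAt f (f' p) p)
    (hlip : ∀ p ∈ segment ℝ x (x + d), ∀ q ∈ segment ℝ x (x + d),
      ‖f' p - f' q‖ ≤ ν * ‖p - q‖) :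
    ⟪f' x, d⟫ - ν / 2 * ‖d‖ ^ 2 ≤ f (x + d) - f x := by
  -- `ψ` has derivative `⟪f' (x + t • d) - f' x, d⟫ + ν t ‖d‖² ≥ 0` on `[0, 1]`.
  set ψ : ℝ → ℝ := fun t => f (x + t • d) - t * ⟪f' x, d⟫ + ν / 2 * ‖d‖ ^ 2 * t ^ 2
  have hψ : ∀ t ∈ Set.Icc (0 : ℝ) 1,
      HasDerivAt ψ (⟪f' (x + t • d), d⟫ - ⟪f' x, d⟫ + ν * ‖d‖ ^ 2 * t) t := by
    intro t ht
    have hpoly := (hasDerivAt_pow 2 t).const_mul (ν / 2 * ‖d‖ ^ 2)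
    have hlin := (hasDerivAt_id t).mul_const ⟪f' x, d⟫
    refine (((hgrad _ (add_smul_mem_segment_add ht)).hasDerivAt_comp_add_smul.sub hlin).add
      hpoly).congr_deriv ?_
    norm_num
    ring
  have hmono : MonotoneOn ψ (Set.Icc 0 1) := by
    refine monotoneOn_of_hasDerivWithinAt_nonneg (convex_Icc 0 1)
      (fun t ht => (hψ t ht).continuousAt.continuousWithinAt)
      (fun t ht => (hψ t (interior_subset ht)).hasDerivWithinAt) fun t ht => ?_
    have := inner_sub_mul_sq_le_inner_gradient_add_smul hlip (interior_subset ht)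
    linarith
  have h01 : ψ 0 ≤ ψ 1 := hmono (by norm_num) (by norm_num) zero_le_one
  norm_num [ψ] at h01
  linarith

end DescentLemma

theorem stmt_8_general (nx : ℕ) (B : EuclideanSpace ℝ (Fin nx) → ℝ)
    (gradB : EuclideanSpace ℝ (Fin nx) → EuclideanSpace ℝ (Fin nx))
    (xn xn1 d : EuclideanSpace ℝ (Fin nx))
    (ν νB η ϱ1 : ℝ) (hνB : 0 < νB)
    (hgrad : ∀ p ∈ segment ℝ xn (xn + d), HasGradientAt B (gradB p) p)
    (hlipgrad : ∀ p ∈ segment ℝ xn (xn + d), ∀ q ∈ segment ℝ xn (xn + d),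
      ‖gradB p - gradB q‖ ≤ ν * ‖p - q‖)
    (hlipB : ∀ a b : EuclideanSpace ℝ (Fin nx), |B a - B b| ≤ νB * ‖a - b‖)
    (hclose : ‖xn1 - (xn + d)‖ ≤ ϱ1 / νB)
    (hctrl : ⟪gradB xn, d⟫ ≥ -η * B xn + ν / 2 * ‖d‖ ^ 2 + ϱ1) :
    B xn1 - B xn ≥ -η * B xn := by
  have hdescent := inner_sub_half_mul_sq_le_sub_of_lipschitz_gradient hgrad hlipgrad
  have hstep : |B xn1 - B (xn + d)| ≤ ϱ1 :=
    (hlipB _ _).trans ((le_div_iff₀' hνB).mp hclose)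
  linarith [neg_le_of_abs_le hstep]

/-- If the learned-model prediction satisfies the margin-`ϱ₁` barrier condition and the
true next state is within `ϱ₁/ν_B` of the prediction, the true next state satisfies the
discrete-time exponential barrier certificate. -/
theorem stmt_8 (nx : ℕ) (B : EuclideanSpace ℝ (Fin nx) → ℝ)
    (gradB : EuclideanSpace ℝ (Fin nx) → EuclideanSpace ℝ (Fin nx))
    (xn xn1 d : EuclideanSpace ℝ (Fin nx))
    (ν νB η ϱ1 : ℝ) (hν : 0 ≤ ν) (hνB : 0 < νB) (hϱ1 : 0 ≤ ϱ1)
    (hη : 0 < η ∧ η ≤ 1)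
    (hgrad : ∀ p ∈ segment ℝ xn (xn + d), HasGradientAt B (gradB p) p)
    (hlipgrad : ∀ p ∈ segment ℝ xn (xn + d), ∀ q ∈ segment ℝ xn (xn + d),
      ‖gradB p - gradB q‖ ≤ ν * ‖p - q‖)
    (hlipB : ∀ a b : EuclideanSpace ℝ (Fin nx), |B a - B b| ≤ νB * ‖a - b‖)
    (hclose : ‖xn1 - (xn + d)‖ ≤ ϱ1 / νB)
    (hctrl : ⟪gradB xn, d⟫ ≥ -η * B xn + ν / 2 * ‖d‖ ^ 2 + ϱ1) :
    B xn1 - B xn ≥ -η * B xn :=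
  stmt_8_general nx B gradB xn xn1 d ν νB η ϱ1 hνB hgrad hlipgrad hlipB hclose hctrl
end
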